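/- The half-conjugacy rack of a free group is the free rack: let X be a set, F(X) the free group on X, and equip X × F(X) with the half-conjugacy rack operation (y, b) ◃ (x, a) := (x, a·b⁻¹·y·b). Then for every rack R and every function f : X → R, there exists a unique shelf homomorphism φ : X × F(X) → R (i.e., φ(u ◃ v) = φ(u) ◃ φ(v) for all u, v) such that φ(x, 1) = f(x) for every x ∈ X. -/

import Mathlib

/-!
Let `ρ : F(X) → Perm R` be the homomorphism sending a generator `x` to the inverse of the left
translation by `f x`; then `φ (x, a) := ρ(a)⁻¹ (f x)`. Every `ρ(a)` is a shelf automorphism of `R`,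
and conjugating a left translation `L_r` by a shelf automorphism `σ` gives `L_{σ r}`; this is what
makes `φ` a shelf homomorphism. Conversely, since `(y, 1) ◃ (x, a) = (x, a y)`, any shelf
homomorphism `ψ` satisfies `ψ (x, a y) = f y ◃ ψ (x, a)`, which determines `ψ (x, a)` from
`ψ (x, 1) = f x` by induction on `a`.
-/

open Quandles

/-- The half-conjugacy rack operation on `X × FreeGroup X`:
`(y, b) ◃ (x, a) := (x, a * b⁻¹ * y * b)`. -/
def freeHalfConjAct {X : Type*} (p q : X × FreeGroup X) : X × FreeGroup X :=
  (q.1, q.2 * p.2⁻¹ * FreeGroup.of p.1 * p.2)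

namespace FreeGroup

variable {X α : Type*}

theorem apply_mul_eq_lift_inv {e : X → Equiv.Perm α} {h : FreeGroup X → α}
    (hh : ∀ a y, h (a * of y) = e y (h a)) (a b : FreeGroup X) :
    h (a * b) = (lift (fun y => (e y)⁻¹) b)⁻¹ (h a) := by
  induction b generalizing a with
  | C1 => simp
  | of y => simp [hh]
  | inv_of y _ =>
    rw [_root_.map_inv, inv_inv, lift_apply_of, Equiv.Perm.eq_inv_iff_eq, ← hh,
      inv_mul_cancel_right]
  | mul b c ihb ihc =>
    rw [← mul_assoc, ihc, ihb, _root_.map_mul, mul_inv_rev, Equiv.Perm.mul_apply]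

end FreeGroup

namespace Shelf

variable (S : Type*) [Shelf S]

def autSubgroup : Subgroup (Equiv.Perm S) where
  carrier := {σ | ∀ x y, σ (x ◃ y) = σ x ◃ σ y}
  mul_mem' {σ τ} hσ hτ x y := by simp only [Equiv.Perm.mul_apply, hτ x y, hσ (τ x) (τ y)]
  one_mem' _ _ := rfl
  inv_mem' {σ} hσ x y := by
    rw [Equiv.Perm.inv_eq_iff_eq, hσ, Equiv.Perm.coe_inv, Equiv.apply_symm_apply,
      Equiv.apply_symm_apply]

end Shelf

namespace Rack

variable {R : Type*} [Rack R]

theorem act'_mem_autSubgroup (r : R) : act' r ∈ Shelf.autSubgroup R :=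
  fun _ _ => Shelf.self_distrib

theorem act'_eq_conj_of_mem_autSubgroup {σ : Equiv.Perm R} (hσ : σ ∈ Shelf.autSubgroup R)
    (r : R) : act' (σ r) = σ * act' r * σ⁻¹ := by
  ext t
  simp only [Equiv.Perm.mul_apply, act'_apply, hσ r, Equiv.Perm.coe_inv, Equiv.apply_symm_apply]

end Rack

section FreeRack

variable {X R : Type*} [Rack R] (f : X → R)

theorem freeHalfConjAct_mk_one (y x : X) (a : FreeGroup X) :
    freeHalfConjAct (y, 1) (x, a) = (x, a * FreeGroup.of y) := by
  simp [freeHalfConjAct]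

def freeHalfConjPerm : FreeGroup X →* Equiv.Perm R :=
  FreeGroup.lift fun y => (Rack.act' (f y))⁻¹

def freeHalfConjLift (p : X × FreeGroup X) : R :=
  (freeHalfConjPerm f p.2)⁻¹ (f p.1)

theorem freeHalfConjPerm_mem_autSubgroup (a : FreeGroup X) :
    freeHalfConjPerm f a ∈ Shelf.autSubgroup R :=
  FreeGroup.range_lift_le (by
    rintro _ ⟨y, rfl⟩
    exact inv_mem (Rack.act'_mem_autSubgroup (f y))) ⟨a, rfl⟩

theorem freeHalfConjLift_mk_one (x : X) : freeHalfConjLift f (x, 1) = f x := by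
  simp [freeHalfConjLift]

theorem freeHalfConjLift_act (u v : X × FreeGroup X) :
    freeHalfConjLift f (freeHalfConjAct u v) = freeHalfConjLift f u ◃ freeHalfConjLift f v := by
  obtain ⟨y, b⟩ := u
  obtain ⟨x, a⟩ := v
  simp only [freeHalfConjLift, freeHalfConjAct]
  set σ := (freeHalfConjPerm f b)⁻¹
  have hσ : σ ∈ Shelf.autSubgroup R := inv_mem (freeHalfConjPerm_mem_autSubgroup f b)
  have hperm : (freeHalfConjPerm f (a * b⁻¹ * FreeGroup.of y * b))⁻¹ =
      σ * Rack.act' (f y) * σ⁻¹ * (freeHalfConjPerm f a)⁻¹ := by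
    simp only [σ, freeHalfConjPerm, map_mul, map_inv, FreeGroup.lift_apply_of, mul_inv_rev,
      inv_inv, mul_assoc]
  rw [hperm, ← Rack.act'_eq_conj_of_mem_autSubgroup hσ, Equiv.Perm.mul_apply, Rack.act'_apply]

theorem eq_freeHalfConjLift {ψ : X × FreeGroup X → R}
    (hψ : ∀ u v, ψ (freeHalfConjAct u v) = ψ u ◃ ψ v) (hψ_one : ∀ x, ψ (x, 1) = f x) :
    ψ = freeHalfConjLift f := by
  funext ⟨x, a⟩
  have hmul : ∀ c y, ψ (x, c * FreeGroup.of y) = Rack.act' (f y) (ψ (x, c)) := fun c y => by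
    rw [← freeHalfConjAct_mk_one, hψ, hψ_one, Rack.act'_apply]
  have := FreeGroup.apply_mul_eq_lift_inv (h := fun c => ψ (x, c)) hmul 1 a
  rwa [one_mul, hψ_one] at this

end FreeRack

theorem halfConj_freeGroup_is_free_rack {X : Type*} (R : Type*) [Rack R] (f : X → R) :
    ∃! φ : X × FreeGroup X → R,
      (∀ u v : X × FreeGroup X, φ (freeHalfConjAct u v) = Shelf.act (φ u) (φ v)) ∧
      ∀ x : X, φ (x, 1) = f x :=
  ⟨freeHalfConjLift f, ⟨freeHalfConjLift_act f, freeHalfConjLift_mk_one f⟩,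
    fun _ ⟨hψ, hψ_one⟩ => eq_freeHalfConjLift f hψ hψ_one⟩
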